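/- arXiv:1708.07928 — 5 statements merged into one kernel-verified Lean document; each statement's English description precedes it below -/
import Mathlib

section
/- Let w be a word with nondecreasing rearrangement \bar{w} = u₁⋯uₙ whose blocks of equal letters end at positions b₁ < b₂ < ⋯ < b_k < n (so u₁ = ⋯ = u_{b₁} < u_{b₁+1} = ⋯ = u_{b₂} < ⋯ < u_{b_k+1} = ⋯ = uₙ). Then a permutation π ∈ Sₙ lies in the image of the rearrangement class R(w) under the coding map c if and only if Id(π) ⊆ {b₁, b₂, …, b_k}. -/
/-- Value of the word `l` at 1-based position `i` (0 if out of range). -/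
def wv (l : List ℕ) (i : ℕ) : ℕ := l.getD (i - 1) 0

/-- Descent set (1-based positions `i < n` with `wᵢ > wᵢ₊₁`). -/
def DSet (l : List ℕ) : Finset ℕ :=
  (Finset.Ico 1 l.length).filter fun i => wv l (i + 1) < wv l i

def des (l : List ℕ) : ℕ := (DSet l).card

def MAJ (l : List ℕ) : ℕ := ∑ i ∈ DSet l, i

/-- First letter. -/
def Fst (l : List ℕ) : ℕ := wv l 1

/-- Number of triples (i, i+1, j) with i+1 < j ≤ n satisfying the pattern
condition `p a b c` where a = wᵢ, b = wᵢ₊₁, c = wⱼ. -/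
def tripCount (l : List ℕ) (p : ℕ → ℕ → ℕ → Bool) : ℕ :=
  (((Finset.Ico 1 l.length) ×ˢ (Finset.Icc 1 l.length)).filter
    (fun q => q.1 + 1 < q.2 ∧ p (wv l q.1) (wv l (q.1 + 1)) (wv l q.2) = true)).card

/-- Number of triples (i, j, j+1) with i < j, j+1 ≤ n satisfying
`p a b c` where a = wᵢ, b = wⱼ, c = wⱼ₊₁. -/
def tripCount2 (l : List ℕ) (p : ℕ → ℕ → ℕ → Bool) : ℕ :=
  (((Finset.Icc 1 l.length) ×ˢ (Finset.Ico 1 l.length)).filter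
    (fun q => q.1 < q.2 ∧ p (wv l q.1) (wv l q.2) (wv l (q.2 + 1)) = true)).card

/-- STAT on permutations: occurrences of 21 + 132 + 213 + 321 (first two letters adjacent). -/
def STATp (l : List ℕ) : ℕ :=
  des l + tripCount l (fun a b c =>
    decide ((a < c ∧ c < b) ∨ (b < a ∧ a < c) ∨ (c < b ∧ b < a)))

/-- STAT on words: occurrences of 213 + 212 + 132 + 121 + 321 + 21 (first two letters adjacent). -/
def STATw (l : List ℕ) : ℕ :=
  des l + tripCount l (fun a b c =>
    decide ((b < a ∧ a < c) ∨ (b < a ∧ a = c) ∨ (a < c ∧ c < b) ∨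
            (a = c ∧ c < b) ∨ (c < b ∧ b < a)))

/-- Standardization (coding map) of a word. -/
def stdz (l : List ℕ) : List ℕ :=
  (List.range l.length).map fun i =>
    ((List.range l.length).filter fun j =>
      decide (l.getD j 0 < l.getD i 0 ∨ (l.getD j 0 = l.getD i 0 ∧ j ≤ i))).length

/-- Inverse descent set: values v of the standardization such that v+1 occurs before v. -/
def IdSet (l : List ℕ) : Finset ℕ :=
  (Finset.Icc 1 l.length).filter fun v =>
    ∃ i ∈ Finset.range l.length, ∃ j ∈ Finset.range l.length,
      j < i ∧ (stdz l).getD i 0 = v ∧ (stdz l).getD j 0 = v + 1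

def ides (l : List ℕ) : ℕ := (IdSet l).card

def IMAJ (l : List ℕ) : ℕ := ∑ i ∈ IdSet l, i

/-- `l` is a permutation of {1, …, n} written in one-line notation. -/
def IsPermList (l : List ℕ) : Prop := l.Perm (List.range' 1 l.length)

def INV (l : List ℕ) : ℕ :=
  (((Finset.Icc 1 l.length) ×ˢ (Finset.Icc 1 l.length)).filter
    (fun q => q.1 < q.2 ∧ wv l q.2 < wv l q.1)).card

/-!
Standardization ranks the positions of a word by (letter, position). If `c(v) = π` with `v` a
rearrangement of `w`, the letter of `v` at `i` is `w̄` at position `πᵢ`; an inverse descent `m`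
of `π` (the value `m + 1` occurring before `m`) then forces `w̄ₘ < w̄ₘ₊₁`, so `m` is a block end.
Conversely, if `Id(π)` avoids the interior of every block, put `vᵢ := w̄_{πᵢ}`: within a block
the values of `π` occur from left to right, which is exactly how standardization breaks ties, so
`c(v) = π`.
-/

open Finset

lemma card_filter_range_getD_eq_countP (l : List ℕ) (p : ℕ → Prop) [DecidablePred p] :
    #{k ∈ range l.length | p (l.getD k 0)} = l.countP (fun a => decide (p a)) := by
  have hl : (List.range l.length).map (fun k => l.getD k 0) = l :=
    List.ext_getElem (by simp) fun k _ hk => by simp [List.getD_eq_getElem?_getD, hk]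
  rw [card_def, filter_val, ← Multiset.countP_map (fun k => l.getD k 0) _ p, range_val,
    Multiset.range, Multiset.map_coe, hl, Multiset.coe_countP]

lemma List.Perm.card_filter_range_getD {l₁ l₂ : List ℕ} (h : l₁.Perm l₂) (p : ℕ → Prop)
    [DecidablePred p] :
    #{k ∈ Finset.range l₁.length | p (l₁.getD k 0)} =
      #{k ∈ Finset.range l₂.length | p (l₂.getD k 0)} := by
  rw [card_filter_range_getD_eq_countP, card_filter_range_getD_eq_countP, h.countP_eq]

lemma card_filter_le_le_card_filter_le_iff {ι α : Type*} [LinearOrder α] (s : Finset ι)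
    (f : ι → α) {i j : ι} (hj : j ∈ s) :
    #{k ∈ s | f k ≤ f j} ≤ #{k ∈ s | f k ≤ f i} ↔ f j ≤ f i := by
  refine ⟨fun h => ?_, fun h => card_le_card (monotone_filter_right s fun _ _ hk => hk.trans h)⟩
  by_contra! hij
  refine h.not_gt (card_lt_card ⟨monotone_filter_right s fun _ _ hk => hk.trans hij.le, ?_⟩)
  exact fun hsub => (mem_filter.1 (hsub (mem_filter.2 ⟨hj, le_rfl⟩))).2.not_gt hij

lemma getD_le_getD_of_pairwise {l : List ℕ} (hs : l.Pairwise (· ≤ ·)) {a b : ℕ}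
    (hab : a ≤ b) (hb : b < l.length) : l.getD a 0 ≤ l.getD b 0 := by
  rw [List.getD_eq_getElem _ _ (hab.trans_lt hb), List.getD_eq_getElem _ _ hb]
  rcases hab.eq_or_lt with rfl | h
  · exact le_rfl
  · exact List.pairwise_iff_getElem.1 hs a b _ hb h

lemma wv_mono {l : List ℕ} (hs : l.Pairwise (· ≤ ·)) {a b : ℕ} (hab : a ≤ b)
    (hb : b ≤ l.length) : wv l a ≤ wv l b := by
  rcases Nat.eq_zero_or_pos b with rfl | hb0
  · rw [Nat.le_zero.1 hab]
  · exact getD_le_getD_of_pairwise hs (by omega) (by omega)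

lemma getD_eq_of_pairwise {l : List ℕ} (hs : l.Pairwise (· ≤ ·)) {x t : ℕ}
    (hlt : #{k ∈ range l.length | l.getD k 0 < x} ≤ t)
    (hle : t < #{k ∈ range l.length | l.getD k 0 ≤ x}) : l.getD t 0 = x := by
  have ht : t < l.length := hle.trans_le ((card_filter_le _ _).trans (card_range _).le)
  refine le_antisymm (not_lt.1 fun hx => hle.not_ge ?_) (not_lt.1 fun hx => hlt.not_gt ?_)
  · calc #{k ∈ range l.length | l.getD k 0 ≤ x} ≤ #(range t) := by
          refine card_le_card fun k hk => mem_range.2 ?_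
          obtain ⟨hk, hkx⟩ := mem_filter.1 hk
          by_contra! htk
          exact (hkx.trans_lt hx).not_ge (getD_le_getD_of_pairwise hs htk (mem_range.1 hk))
      _ = t := card_range t
  · calc t < #(range (t + 1)) := by simp
      _ ≤ #{k ∈ range l.length | l.getD k 0 < x} := by
          refine card_le_card fun k hk => ?_
          rw [mem_range] at hk
          exact mem_filter.2 ⟨mem_range.2 (by omega),
            (getD_le_getD_of_pairwise hs (by omega) ht).trans_lt hx⟩

def stdKey (l : List ℕ) (j : ℕ) : ℕ ×ₗ ℕ := toLex (l.getD j 0, j)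

lemma stdz_length (l : List ℕ) : (stdz l).length = l.length := by simp [stdz]

lemma stdKey_le_stdKey_iff {l : List ℕ} {i j : ℕ} :
    stdKey l j ≤ stdKey l i ↔ l.getD j 0 < l.getD i 0 ∨ (l.getD j 0 = l.getD i 0 ∧ j ≤ i) :=
  Prod.Lex.toLex_le_toLex

lemma stdKey_lt_stdKey_iff {l : List ℕ} {i j : ℕ} :
    stdKey l j < stdKey l i ↔ l.getD j 0 < l.getD i 0 ∨ (l.getD j 0 = l.getD i 0 ∧ j < i) :=
  Prod.Lex.toLex_lt_toLex

lemma stdz_getD {l : List ℕ} {i : ℕ} (hi : i < l.length) :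
    (stdz l).getD i 0 = #{j ∈ range l.length | stdKey l j ≤ stdKey l i} := by
  simp only [stdKey_le_stdKey_iff]
  rw [List.getD_eq_getElem _ _ (by simpa [stdz] using hi)]
  simp only [stdz, List.getElem_map, List.getElem_range]
  rfl

lemma stdz_getD_le_getD_iff {l : List ℕ} {i j : ℕ} (hi : i < l.length) (hj : j < l.length) :
    (stdz l).getD j 0 ≤ (stdz l).getD i 0 ↔ stdKey l j ≤ stdKey l i := by
  rw [stdz_getD hi, stdz_getD hj]
  exact card_filter_le_le_card_filter_le_iff _ _ (mem_range.2 hj)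

lemma wv_stdz_getD {w l : List ℕ} (hs : w.Pairwise (· ≤ ·)) (hp : w.Perm l) {i : ℕ}
    (hi : i < l.length) : wv w ((stdz l).getD i 0) = l.getD i 0 := by
  have hlt : #{k ∈ range l.length | l.getD k 0 < l.getD i 0} < (stdz l).getD i 0 := by
    rw [stdz_getD hi]
    refine card_lt_card ⟨monotone_filter_right _ fun k _ hk => ?_, fun hsub => ?_⟩
    · exact stdKey_le_stdKey_iff.2 (Or.inl hk)
    · simpa using (mem_filter.1 (hsub (mem_filter.2 ⟨mem_range.2 hi, le_rfl⟩))).2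
  have hle : (stdz l).getD i 0 ≤ #{k ∈ range l.length | l.getD k 0 ≤ l.getD i 0} := by
    rw [stdz_getD hi]
    refine card_le_card (monotone_filter_right _ fun k _ hk => ?_)
    rcases stdKey_le_stdKey_iff.1 hk with h | ⟨h, -⟩ <;> omega
  rw [← hp.card_filter_range_getD (· < l.getD i 0)] at hlt
  rw [← hp.card_filter_range_getD (· ≤ l.getD i 0)] at hle
  exact getD_eq_of_pairwise hs (by omega) (by omega)

lemma getD_map_of_lt {l : List ℕ} (f : ℕ → ℕ) {i : ℕ} (hi : i < l.length) :
    (l.map f).getD i 0 = f (l.getD i 0) := by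
  rw [List.getD_eq_getElem _ _ (by simpa using hi), List.getElem_map, List.getD_eq_getElem]

/-- For a sorted word these are the block ends `b₁ < ⋯ < b_k`. -/
def ascentSet (l : List ℕ) : Finset ℕ :=
  (Ico 1 l.length).filter fun i => wv l i < wv l (i + 1)

namespace IsPermList

variable {π : List ℕ} (hπ : IsPermList π)
include hπ

lemma getD_mem_Icc {i : ℕ} (hi : i < π.length) : π.getD i 0 ∈ Icc 1 π.length := by
  have hmem := hπ.mem_iff.1 (List.getD_eq_getElem π 0 hi ▸ List.getElem_mem hi)
  simpa [List.mem_range'_1, Nat.lt_succ_iff, add_comm] using hmem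

lemma getD_inj {i j : ℕ} (hi : i < π.length) (hj : j < π.length)
    (h : π.getD i 0 = π.getD j 0) : i = j := by
  rw [List.getD_eq_getElem _ _ hi, List.getD_eq_getElem _ _ hj] at h
  exact (hπ.nodup_iff.2 List.nodup_range').getElem_inj_iff.1 h

lemma exists_getD_eq {a : ℕ} (ha : a ∈ Icc 1 π.length) : ∃ i < π.length, π.getD i 0 = a := by
  rw [mem_Icc] at ha
  obtain ⟨i, hi, rfl⟩ :=
    List.mem_iff_getElem.1 (hπ.mem_iff.2 (List.mem_range'_1.2 ⟨ha.1, by omega⟩))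
  exact ⟨i, hi, List.getD_eq_getElem _ _ hi⟩

lemma card_filter_getD_le {b : ℕ} (hb : b ≤ π.length) :
    #{i ∈ range π.length | π.getD i 0 ≤ b} = b := by
  refine (card_nbij (t := Icc 1 b) (π.getD · 0) ?_ ?_ ?_).trans (by simp)
  · intro i hi
    obtain ⟨hi, hib⟩ := mem_filter.1 hi
    exact mem_Icc.2 ⟨(mem_Icc.1 (hπ.getD_mem_Icc (mem_range.1 hi))).1, hib⟩
  · intro i hi j hj h
    exact hπ.getD_inj (mem_range.1 (mem_filter.1 hi).1) (mem_range.1 (mem_filter.1 hj).1) h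
  · intro a ha
    rw [coe_Icc, Set.mem_Icc] at ha
    obtain ⟨i, hi, rfl⟩ := hπ.exists_getD_eq (mem_Icc.2 ⟨ha.1, ha.2.trans hb⟩)
    exact ⟨i, mem_filter.2 ⟨mem_range.2 hi, ha.2⟩, rfl⟩

lemma stdz_eq_of_stdKey_lt_of_lt {l : List ℕ} (hlen : l.length = π.length)
    (hkey : ∀ i < π.length, ∀ j < π.length, π.getD j 0 < π.getD i 0 → stdKey l j < stdKey l i) :
    stdz l = π := by
  have hle : ∀ i < π.length, ∀ j < π.length,
      stdKey l j ≤ stdKey l i ↔ π.getD j 0 ≤ π.getD i 0 := by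
    intro i hi j hj
    refine ⟨fun h => not_lt.1 fun hlt => (hkey j hj i hi hlt).not_ge h, fun h => ?_⟩
    rcases h.lt_or_eq with hlt | heq
    · exact (hkey i hi j hj hlt).le
    · rw [hπ.getD_inj hj hi heq]
  refine List.ext_getElem (by simp [stdz, hlen]) fun i h₁ h₂ => ?_
  rw [← List.getD_eq_getElem _ 0 h₁, ← List.getD_eq_getElem _ 0 h₂, stdz_getD (hlen ▸ h₂), hlen,
    ← hπ.card_filter_getD_le (mem_Icc.1 (hπ.getD_mem_Icc h₂)).2]
  exact congrArg card (filter_congr fun j hj => hle i h₂ j (mem_range.1 hj))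

lemma stdz_self : stdz π = π :=
  hπ.stdz_eq_of_stdKey_lt_of_lt rfl fun _ _ _ _ h => stdKey_lt_stdKey_iff.2 (Or.inl h)

lemma mem_IdSet_iff {m : ℕ} : m ∈ IdSet π ↔
    ∃ i < π.length, ∃ j < π.length, j < i ∧ π.getD i 0 = m ∧ π.getD j 0 = m + 1 := by
  simp only [IdSet, hπ.stdz_self, mem_filter, mem_range, and_iff_right_iff_imp]
  rintro ⟨i, hi, -, -, -, rfl, -⟩
  exact hπ.getD_mem_Icc hi

lemma lt_of_getD_eq_succ {i k : ℕ} (hi : i < π.length) (hk : k < π.length)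
    (hsucc : π.getD i 0 = π.getD k 0 + 1) (hId : π.getD k 0 ∉ IdSet π) : k < i := by
  refine lt_of_le_of_ne (not_lt.1 fun hik => hId ?_) fun h => by subst h; omega
  exact hπ.mem_IdSet_iff.2 ⟨k, hk, i, hi, hik, rfl, hsucc⟩

lemma lt_of_getD_lt {i k : ℕ} (hi : i < π.length) (hk : k < π.length)
    (hlt : π.getD k 0 < π.getD i 0) (hId : ∀ c ∈ Ico (π.getD k 0) (π.getD i 0), c ∉ IdSet π) :
    k < i := by
  obtain ⟨d, hd⟩ := Nat.exists_eq_add_of_lt hlt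
  induction d generalizing k with
  | zero => exact hπ.lt_of_getD_eq_succ hi hk hd (hId _ (mem_Ico.2 ⟨le_rfl, hlt⟩))
  | succ d ih =>
    have hi_le := (mem_Icc.1 (hπ.getD_mem_Icc hi)).2
    obtain ⟨k', hk', hsucc⟩ :=
      hπ.exists_getD_eq (a := π.getD k 0 + 1) (mem_Icc.2 ⟨by omega, by omega⟩)
    have hkk' : k < k' := hπ.lt_of_getD_eq_succ hk' hk hsucc (hId _ (mem_Ico.2 ⟨le_rfl, hlt⟩))
    refine hkk'.trans (ih hk' (by omega) (fun c hc => hId c ?_) (by omega))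
    simp only [mem_Ico] at hc ⊢
    omega

lemma map_wv_perm {w : List ℕ} (hlen : w.length = π.length) : (π.map (wv w)).Perm w := by
  refine (hπ.map _).trans (List.Perm.of_eq (List.ext_getElem (by simp [hlen]) fun t _ ht => ?_))
  simp [wv, List.getD_eq_getElem?_getD, ht]

lemma stdz_map_wv {w : List ℕ} (hs : w.Pairwise (· ≤ ·)) (hlen : w.length = π.length)
    (hId : IdSet π ⊆ ascentSet w) : stdz (π.map (wv w)) = π := by
  refine hπ.stdz_eq_of_stdKey_lt_of_lt (List.length_map _) fun i hi j hj hlt => ?_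
  have hi_le := (mem_Icc.1 (hπ.getD_mem_Icc hi)).2
  rw [stdKey_lt_stdKey_iff, getD_map_of_lt _ hi, getD_map_of_lt _ hj]
  rcases (wv_mono hs hlt.le (hlen ▸ hi_le)).lt_or_eq with hwv | hwv
  · exact Or.inl hwv
  refine Or.inr ⟨hwv, hπ.lt_of_getD_lt hi hj hlt fun c hc hcId => ?_⟩
  -- `w` is constant on the block from `π j` to `π i`, so it has no ascent there
  have hasc := mem_filter.1 (hId hcId)
  rw [mem_Ico] at hc
  have := wv_mono hs hc.1 (by omega)
  have := wv_mono hs (a := c + 1) hc.2 (hlen ▸ hi_le)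
  omega

end IsPermList

lemma IdSet_stdz_subset_ascentSet {w v : List ℕ} (hs : w.Pairwise (· ≤ ·)) (hp : w.Perm v)
    (hπ : IsPermList (stdz v)) : IdSet (stdz v) ⊆ ascentSet w := by
  intro m hm
  obtain ⟨i, hi, j, hj, hji, hvi, hvj⟩ := hπ.mem_IdSet_iff.1 hm
  have hm_pos := (mem_Icc.1 (hπ.getD_mem_Icc hi)).1
  have hm_lt := (mem_Icc.1 (hπ.getD_mem_Icc hj)).2
  rw [stdz_length] at hi hj hm_lt
  rw [hvi] at hm_pos
  rw [hvj] at hm_lt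
  have hkey : ¬ stdKey v j ≤ stdKey v i := by
    rw [← stdz_getD_le_getD_iff hi hj, hvi, hvj]
    omega
  rw [stdKey_le_stdKey_iff, ← wv_stdz_getD hs hp hi, ← wv_stdz_getD hs hp hj, hvi, hvj] at hkey
  simp only [ascentSet, mem_filter, mem_Ico, hp.length_eq]
  omega

/-- A permutation π lies in the image of R(w) under the coding map iff
Id(π) ⊆ {b₁, …, b_k}, the block-end positions of the sorted word. -/
theorem stmt3 (n : ℕ) (w wbar : List ℕ) (hw : w.length = n)
    (hre : wbar.Perm w) (hsort : wbar.Pairwise (· ≤ ·))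
    (B : Finset ℕ) (hB : B = (Finset.Ico 1 n).filter fun i => wv wbar i < wv wbar (i + 1))
    (π : List ℕ) (hπ : π.length = n) (hperm : IsPermList π) :
    (∃ v : List ℕ, v.Perm w ∧ stdz v = π) ↔ IdSet π ⊆ B := by
  have hlen : wbar.length = π.length := by rw [hre.length_eq, hw, hπ]
  rw [hB, ← hw, ← hre.length_eq]
  change _ ↔ IdSet π ⊆ ascentSet wbar
  constructor
  · rintro ⟨v, hv, rfl⟩
    exact IdSet_stdz_subset_ascentSet hsort (hre.trans hv.symm) hperm
  · intro hId
    exact ⟨π.map (wv wbar), (hperm.map_wv_perm hlen).trans hre, hperm.stdz_map_wv hsort hlen hId⟩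
end

section
/- The coding (standardization) map preserves STAT: for any word w, STAT(c(w)) = STAT(w), where STAT on words counts occurrences of the vincular patterns \underline{21}3 + \underline{21}2 + \underline{13}2 + \underline{12}1 + \underline{32}1 + \underline{21} and STAT on permutations counts \underline{21} + \underline{13}2 + \underline{21}3 + \underline{32}1. -/
def Fcnt (w : List ℕ) (i : ℕ) : ℕ :=
  ((Finset.range w.length).filter fun j =>
    w.getD j 0 < w.getD i 0 ∨ (w.getD j 0 = w.getD i 0 ∧ j ≤ i)).card

lemma length_stdz (w : List ℕ) : (stdz w).length = w.length := by simp [stdz]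

lemma stdz_getD_s7 (w : List ℕ) {p : ℕ} (hp : p < w.length) :
    (stdz w).getD p 0 = Fcnt w p := by
  rw [List.getD_eq_getElem _ _ (by simpa [stdz] using hp)]
  simp only [stdz, List.getElem_map, List.getElem_range]
  rfl

lemma Fcnt_lt (w : List ℕ) {p q : ℕ} (hq : q < w.length)
    (h : w.getD p 0 < w.getD q 0 ∨ (w.getD p 0 = w.getD q 0 ∧ p < q)) :
    Fcnt w p < Fcnt w q := by
  apply Finset.card_lt_card
  rw [Finset.ssubset_iff_of_subset]
  · refine ⟨q, ?_, ?_⟩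
    · exact Finset.mem_filter.mpr ⟨Finset.mem_range.mpr hq, Or.inr ⟨rfl, le_refl q⟩⟩

    · simp only [Finset.mem_filter, Finset.mem_range, not_and, not_or]
      intro _
      rcases h with h | ⟨h, hpq⟩
      · exact ⟨by omega, fun he => absurd he (by omega)⟩
      · exact ⟨by omega, fun _ => by omega⟩
  · intro j hj
    simp only [Finset.mem_filter, Finset.mem_range] at hj ⊢
    refine ⟨hj.1, ?_⟩
    rcases hj.2 with h1 | ⟨h1, h2⟩ <;> rcases h with h | ⟨h, hpq⟩
    · exact Or.inl (by omega)
    · exact Or.inl (by omega)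
    · exact Or.inl (by omega)
    · exact Or.inr ⟨by omega, by omega⟩

lemma stdz_lt_iff (w : List ℕ) {p q : ℕ} (hp : p < w.length) (hq : q < w.length) :
    (stdz w).getD p 0 < (stdz w).getD q 0 ↔
      (w.getD p 0 < w.getD q 0 ∨ (w.getD p 0 = w.getD q 0 ∧ p < q)) := by
  rw [stdz_getD_s7 w hp, stdz_getD_s7 w hq]
  constructor
  · intro h
    by_contra hc
    push_neg at hc
    rcases lt_trichotomy (w.getD p 0) (w.getD q 0) with h1 | h1 | h1
    · exact absurd h1 (not_lt.mpr hc.1)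
    · rcases lt_trichotomy p q with h2 | h2 | h2
      · exact absurd h2 (not_lt.mpr (hc.2 h1))
      · subst h2; exact absurd h (lt_irrefl _)
      · exact absurd h (not_lt.2 (le_of_lt (Fcnt_lt w hp (Or.inr ⟨h1.symm, h2⟩))))
    · exact absurd h (not_lt.2 (le_of_lt (Fcnt_lt w hp (Or.inl h1))))
  · exact Fcnt_lt w hq

/-- Standardization sends word-STAT to permutation-STAT. -/
theorem stmt7 (w : List ℕ) : STATp (stdz w) = STATw w := by
  unfold STATp STATw
  congr 1
  · -- des equality
    unfold des
    congr 1
    unfold DSet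
    rw [length_stdz]
    apply Finset.filter_congr
    intro i hi
    simp only [Finset.mem_Ico] at hi
    obtain ⟨h1, h2⟩ := hi
    unfold wv
    have e1 : i + 1 - 1 = i := by omega
    rw [e1]
    rw [stdz_lt_iff w h2 (by omega)]
    constructor
    · rintro (h | ⟨h, hc⟩)
      · exact h
      · omega
    · exact fun h => Or.inl h
  · -- tripCount equality
    unfold tripCount
    rw [length_stdz]
    congr 1
    apply Finset.filter_congr
    rintro ⟨i, j⟩ hij
    simp only [Finset.mem_product, Finset.mem_Ico, Finset.mem_Icc] at hij
    obtain ⟨⟨hi1, hi2⟩, hj1, hj2⟩ := hij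
    simp only [eq_iff_iff, and_congr_right_iff, decide_eq_true_eq]
    intro hlt
    unfold wv
    have e1 : i + 1 - 1 = i := by omega
    rw [e1]
    have hpi : i - 1 < w.length := by omega
    have hpi2 : i < w.length := hi2
    have hpj : j - 1 < w.length := by omega
    rw [stdz_lt_iff w hpi hpj, stdz_lt_iff w hpj hpi2, stdz_lt_iff w hpi2 hpi]
    have h1 : i - 1 < j - 1 := by omega
    have h2 : ¬ (j - 1 < i) := by omega
    have h3 : ¬ (i < i - 1) := by omega
    have h4 : i - 1 < i := by omega
    have h5 : i < j - 1 := by omega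
    constructor <;> intro h <;> omega
end

section
/- For every π ∈ Sₙ, the Foata–Schützenberger map ȷ preserves the inverse descent set and complements the descent set: Id(ȷ(π)) = Id(π) and D(ȷ(π)) = {n−k : k ∈ D(π)}. -/
/-- Schensted row insertion: insert x into a row, possibly bumping an entry. -/
def rowIns (r : List ℕ) (x : ℕ) : List ℕ × Option ℕ :=
  match r.findIdx? (fun y => decide (x < y)) with
  | none => (r ++ [x], none)
  | some i => (r.set i x, r[i]?)

/-- Schensted insertion of a letter into a tableau (list of rows). -/
def insertT : List (List ℕ) → ℕ → List (List ℕ)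
  | [], x => [[x]]
  | r :: rs, x =>
    match rowIns r x with
    | (r', none) => r' :: rs
    | (r', some y) => r' :: insertT rs y

/-- Insertion tableau P of a word. -/
def Ptab (w : List ℕ) : List (List ℕ) := w.foldl insertT []

/-- Place label k in the recording tableau q at the first row where q is
shorter than the (new) shape `pshape`. -/
def growQ (k : ℕ) : List ℕ → List (List ℕ) → List (List ℕ)
  | _, [] => [[k]]
  | [], q => q
  | L :: Ls, r :: rs =>
      if r.length < L then (r ++ [k]) :: rs else r :: growQ k Ls rs

/-- Recording tableau Q of a word (labels 1, 2, …). -/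
def Qtab (w : List ℕ) : List (List ℕ) :=
  (w.foldl (fun s x =>
      let p' := insertT s.1 x
      (p', growQ s.2.2 (p'.map List.length) s.2.1, s.2.2 + 1))
    (([], [], 1) : List (List ℕ) × List (List ℕ) × ℕ)).2.1

/-- Reverse-complement of a permutation word. -/
def rcL (l : List ℕ) : List ℕ := l.reverse.map fun x => l.length + 1 - x

def shape (t : List (List ℕ)) : List ℕ := t.map List.length

/-- `σ = ȷ(l)`: σ is the permutation with RSK pair (P(l), Q(l^rc)). -/
def isFS (σ l : List ℕ) : Prop :=
  IsPermList σ ∧ σ.length = l.length ∧ Ptab σ = Ptab l ∧ Qtab σ = Qtab (rcL l)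

/-!
Descents are read off the recording tableau. By the row bumping lemma, for a word with distinct
letters, `k` is a descent exactly when the `(k+1)`-st letter creates its new box in a strictly lower
row of the insertion tableau than the `k`-th letter did, and `Q(w)` records the row of every new
box. Hence `Q(ȷ(π)) = Q(π^{rc})` gives `D(ȷ(π)) = D(π^{rc}) = {n - k : k ∈ D(π)}`.

Inverse descents are read off the insertion tableau. Every word is Knuth equivalent to the reading
word of its insertion tableau, so `P(ȷ(π)) = P(π)` makes `ȷ(π)` and `π` Knuth equivalent. An
elementary Knuth move swaps two adjacent letters whose values differ by at least two, so it never
changes whether `v + 1` occurs before `v`, which is what `v ∈ Id` means for a permutation.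
-/

open scoped List

theorem List.pair_sublist_iff_getElem {α : Type*} {l : List α} {a b : α} :
    [a, b] <+ l ↔
      ∃ i j, ∃ (hi : i < l.length) (hj : j < l.length), i < j ∧ l[i] = a ∧ l[j] = b := by
  constructor
  · intro h
    obtain ⟨is, h', hij⟩ := List.sublist_eq_map_getElem h
    rcases is with _ | ⟨i, _ | ⟨j, _ | _⟩⟩ <;> simp at h'
    obtain ⟨rfl, rfl⟩ := h'
    exact ⟨i, j, i.2, j.2, by simpa using hij, rfl, rfl⟩
  · rintro ⟨i, j, hi, hj, hij, rfl, rfl⟩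
    simpa using List.map_getElem_sublist (is := [⟨i, hi⟩, ⟨j, hj⟩]) (by simpa using hij)

theorem List.pair_sublist_swap {α : Type*} {a b c d : α} (u v : List α) (h : ¬(c = a ∧ d = b))
    (hs : [c, d] <+ u ++ a :: b :: v) : [c, d] <+ u ++ b :: a :: v := by
  simp only [List.sublist_append_iff, List.sublist_cons_iff] at hs ⊢
  obtain ⟨l₁, l₂, hl, hu, hv⟩ := hs
  refine ⟨l₁, l₂, hl, hu, ?_⟩
  rcases l₁ with _ | ⟨e, _ | ⟨f, l₁⟩⟩ <;> simp_all <;> aesop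

theorem List.countP_le_range'_one {n c : ℕ} (hc : c ≤ n) :
    (List.range' 1 n).countP (fun a => a ≤ c) = c := by
  rw [List.countP_eq_length_filter, show n = c + (n - c) by omega, ← List.range'_append,
    List.filter_append, List.filter_eq_self.mpr, List.filter_eq_nil_iff.mpr] <;>
    simp [List.mem_range'] <;> omega

theorem IsPermList.nodup {w : List ℕ} (h : IsPermList w) : w.Nodup :=
  h.nodup_iff.mpr List.nodup_range'

theorem IsPermList.mem_iff {w : List ℕ} (h : IsPermList w) {a : ℕ} :
    a ∈ w ↔ 1 ≤ a ∧ a ≤ w.length := by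
  rw [List.Perm.mem_iff h, List.mem_range'_1]
  omega

theorem IsPermList.wv_bounds {w : List ℕ} (h : IsPermList w) {i : ℕ} (h1 : 1 ≤ i)
    (h2 : i ≤ w.length) : 1 ≤ wv w i ∧ wv w i ≤ w.length := by
  rw [wv, List.getD_eq_getElem w 0 (by omega)]
  exact h.mem_iff.mp (List.getElem_mem _)

theorem rcL_length (l : List ℕ) : (rcL l).length = l.length := by simp [rcL]

theorem isPermList_rcL {l : List ℕ} (hl : IsPermList l) : IsPermList (rcL l) := by
  have hrange : (List.range' 1 l.length).map (fun x => l.length + 1 - x) =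
      (List.range' 1 l.length).reverse := by
    apply List.ext_getElem (by simp)
    intro i h1 h2
    simp only [List.getElem_map, List.getElem_reverse, List.getElem_range']
    simp only [List.length_map, List.length_range'] at h1 ⊢
    omega
  rw [IsPermList, rcL_length]
  calc rcL l ~ l.map (fun x => l.length + 1 - x) := l.reverse_perm.map _
    _ ~ (List.range' 1 l.length).map (fun x => l.length + 1 - x) := hl.map _
    _ ~ List.range' 1 l.length := hrange ▸ List.reverse_perm _

theorem wv_rcL {l : List ℕ} {i : ℕ} (h1 : 1 ≤ i) (h2 : i ≤ l.length) :
    wv (rcL l) i = l.length + 1 - wv l (l.length + 1 - i) := by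
  simp only [wv, rcL]
  rw [List.getD_eq_getElem _ 0 (by simp; omega), List.getD_eq_getElem _ 0 (by omega),
    List.getElem_map, List.getElem_reverse]
  congr 2
  omega

theorem IsPermList.rcL_descent_iff {l : List ℕ} (hl : IsPermList l) {k : ℕ} (h1 : 1 ≤ k)
    (h2 : k < l.length) :
    wv (rcL l) (k + 1) < wv (rcL l) k ↔ wv l (l.length - k + 1) < wv l (l.length - k) := by
  rw [wv_rcL (by omega) (by omega), wv_rcL h1 (by omega),
    show l.length + 1 - (k + 1) = l.length - k by omega,
    show l.length + 1 - k = l.length - k + 1 by omega]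
  have := hl.wv_bounds (i := l.length - k) (by omega) (by omega)
  have := hl.wv_bounds (i := l.length - k + 1) (by omega) (by omega)
  omega

theorem IsPermList.DSet_rcL {l : List ℕ} (hl : IsPermList l) :
    DSet (rcL l) = (DSet l).image fun k => l.length - k := by
  ext k
  simp only [DSet, Finset.mem_image, Finset.mem_filter, Finset.mem_Ico, rcL_length]
  constructor
  · rintro ⟨⟨hk1, hk2⟩, hk⟩
    exact ⟨l.length - k, ⟨⟨by omega, by omega⟩, (hl.rcL_descent_iff hk1 hk2).mp hk⟩, by omega⟩
  · rintro ⟨m, ⟨⟨hm1, hm2⟩, hm⟩, rfl⟩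
    refine ⟨⟨by omega, by omega⟩, (hl.rcL_descent_iff (by omega) (by omega)).mpr ?_⟩
    rwa [Nat.sub_sub_self hm2.le]

theorem rowIns_cases (r : List ℕ) (x : ℕ) :
    (rowIns r x = (r ++ [x], none) ∧ ∀ y ∈ r, y ≤ x) ∨
    ∃ i, ∃ hi : i < r.length, rowIns r x = (r.set i x, some r[i]) ∧ x < r[i] ∧
      ∀ j (hj : j < i), r[j] ≤ x := by
  cases h : r.findIdx? (fun y => decide (x < y)) with
  | none =>
    refine .inl ⟨by simp [rowIns, h], fun y hy => ?_⟩
    simpa using List.findIdx?_eq_none_iff.mp h y hy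
  | some i =>
    obtain ⟨hi, rfl⟩ := List.findIdx?_eq_some_iff_findIdx_eq.mp h
    refine .inr ⟨_, hi, by simp [rowIns, h, List.getElem?_eq_getElem hi], ?_, fun j hj => ?_⟩
    · simpa using List.findIdx_getElem (w := hi)
    · simpa using List.not_of_lt_findIdx hj

theorem rowIns_perm (r : List ℕ) (x : ℕ) : (rowIns r x).1 ++ (rowIns r x).2.toList ~ x :: r := by
  rcases rowIns_cases r x with ⟨h, -⟩ | ⟨i, hi, h, -⟩ <;> rw [h]
  · simp
  · calc r.set i x ++ [r[i]] ~ r[i] :: r.set i x := List.perm_append_singleton _ _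
      _ ~ r[i] :: x :: r.eraseIdx i := (List.set_perm_cons_eraseIdx hi x).cons _
      _ ~ x :: r[i] :: r.eraseIdx i := List.Perm.swap _ _ _
      _ ~ x :: r := (List.getElem_cons_eraseIdx_perm hi).cons _

theorem mem_of_rowIns_eq_some {r : List ℕ} {x y : ℕ} (h : (rowIns r x).2 = some y) : y ∈ r := by
  rcases rowIns_cases r x with ⟨h', -⟩ | ⟨i, hi, h', -⟩ <;> rw [h'] at h
  · cases h
  · cases h; exact List.getElem_mem hi

theorem rowIns_fst_of_none {r : List ℕ} {x : ℕ} (h : (rowIns r x).2 = none) :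
    (rowIns r x).1 = r ++ [x] := by
  rcases rowIns_cases r x with ⟨h', -⟩ | ⟨i, hi, h', -⟩ <;> rw [h'] at h ⊢
  cases h

theorem pairwise_rowIns {r : List ℕ} {x : ℕ} (hr : r.Pairwise (· < ·)) (hx : x ∉ r) :
    (rowIns r x).1.Pairwise (· < ·) := by
  rcases rowIns_cases r x with ⟨h, hle⟩ | ⟨i, hi, h, hxi, hle⟩ <;> simp only [h]
  · refine List.pairwise_append.mpr ⟨hr, List.pairwise_singleton _ _, ?_⟩
    simp only [List.mem_singleton, forall_eq]
    exact fun y hy => lt_of_le_of_ne (hle y hy) (ne_of_mem_of_not_mem hy hx)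
  · rw [List.pairwise_iff_getElem] at hr ⊢
    intro a b ha hb hab
    simp only [List.length_set] at ha hb
    simp only [List.getElem_set]
    split_ifs with h1 h2 h2
    · omega
    · exact h1 ▸ hxi.trans (hr _ b hi (by simpa using hb) (by omega))
    · exact lt_of_le_of_ne (hle a (by omega)) (ne_of_mem_of_not_mem (List.getElem_mem _) hx)
    · exact hr a b ha hb hab

def RowsIncreasing (t : List (List ℕ)) : Prop := ∀ r ∈ t, r.Pairwise (· < ·)

def newBoxRow : List (List ℕ) → ℕ → ℕ
  | [], _ => 0
  | r :: rs, x =>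
    match (rowIns r x).2 with
    | none => 0
    | some y => newBoxRow rs y + 1

def addBox : List ℕ → ℕ → List ℕ
  | [], _ => [1]
  | L :: Ls, 0 => (L + 1) :: Ls
  | L :: Ls, d + 1 => L :: addBox Ls d

section Insertion

variable {r : List ℕ} {rs t : List (List ℕ)} {x y : ℕ}

theorem insertT_cons_of_none (h : (rowIns r x).2 = none) :
    insertT (r :: rs) x = (rowIns r x).1 :: rs := by
  rw [insertT, ← Prod.eta (rowIns r x), h]

theorem insertT_cons_of_some (h : (rowIns r x).2 = some y) :
    insertT (r :: rs) x = (rowIns r x).1 :: insertT rs y := by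
  rw [insertT, ← Prod.eta (rowIns r x), h]

theorem newBoxRow_cons_of_none (h : (rowIns r x).2 = none) : newBoxRow (r :: rs) x = 0 := by
  rw [newBoxRow, h]

theorem newBoxRow_cons_of_some (h : (rowIns r x).2 = some y) :
    newBoxRow (r :: rs) x = newBoxRow rs y + 1 := by
  rw [newBoxRow, h]

theorem flatten_insertT_perm (t : List (List ℕ)) (x : ℕ) :
    (insertT t x).flatten ~ x :: t.flatten := by
  induction t generalizing x with
  | nil => simp [insertT]
  | cons r rs ih =>
    have hrow := (rowIns_perm r x).append_right rs.flatten
    rw [List.flatten_cons, ← List.cons_append]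
    cases h : (rowIns r x).2 with
    | none => simpa [insertT_cons_of_none h, h] using hrow
    | some y =>
      rw [insertT_cons_of_some h, List.flatten_cons]
      calc (rowIns r x).1 ++ (insertT rs y).flatten ~ (rowIns r x).1 ++ y :: rs.flatten :=
            (ih y).append_left _
        _ ~ (x :: r) ++ rs.flatten := by simpa [h] using hrow

theorem shape_insertT (t : List (List ℕ)) (x : ℕ) :
    shape (insertT t x) = addBox (shape t) (newBoxRow t x) := by
  induction t generalizing x with
  | nil => simp [insertT, shape, newBoxRow, addBox]
  | cons r rs ih =>
    have hlen := (rowIns_perm r x).length_eq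
    cases h : (rowIns r x).2 with
    | none => simp_all [insertT_cons_of_none h, newBoxRow_cons_of_none h, shape, addBox]
    | some y =>
      simp_all [insertT_cons_of_some h, newBoxRow_cons_of_some h, shape, addBox]

theorem newBoxRow_le_length (t : List (List ℕ)) (x : ℕ) : newBoxRow t x ≤ t.length := by
  induction t generalizing x with
  | nil => simp [newBoxRow]
  | cons r rs ih =>
    cases h : (rowIns r x).2 with
    | none => simp [newBoxRow_cons_of_none h]
    | some y => simpa [newBoxRow_cons_of_some h] using ih y

theorem nodup_cons_flatten_of_rowIns_eq_some (hx : (x :: (r :: rs).flatten).Nodup)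
    (h : (rowIns r x).2 = some y) : (y :: rs.flatten).Nodup := by
  simp only [List.flatten_cons, List.nodup_cons, List.nodup_append] at hx
  exact List.nodup_cons.mpr
    ⟨fun hy => hx.2.2.2 y (mem_of_rowIns_eq_some h) y hy rfl, hx.2.2.1⟩

theorem RowsIncreasing.insertT (ht : RowsIncreasing t) (hx : (x :: t.flatten).Nodup) :
    RowsIncreasing (insertT t x) := by
  induction t generalizing x with
  | nil => simp [RowsIncreasing, _root_.insertT]
  | cons r rs ih =>
    have hxr : x ∉ r := fun h => (List.nodup_cons.mp hx).1 (by simp [h])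
    have hr' := pairwise_rowIns (ht r (by simp)) hxr
    have hrs : RowsIncreasing rs := fun q hq => ht q (by simp [hq])
    cases h : (rowIns r x).2 with
    | none => exact insertT_cons_of_none h ▸ List.forall_mem_cons.mpr ⟨hr', hrs⟩
    | some y =>
      exact insertT_cons_of_some h ▸ List.forall_mem_cons.mpr
        ⟨hr', ih hrs (nodup_cons_flatten_of_rowIns_eq_some hx h)⟩

end Insertion

theorem Ptab_append_singleton (w : List ℕ) (x : ℕ) : Ptab (w ++ [x]) = insertT (Ptab w) x := by
  simp [Ptab, List.foldl_append]

theorem flatten_Ptab_perm (w : List ℕ) : (Ptab w).flatten ~ w := by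
  induction w using List.reverseRecOn with
  | nil => simp [Ptab]
  | append_singleton w x ih =>
    rw [Ptab_append_singleton]
    calc (insertT (Ptab w) x).flatten ~ x :: (Ptab w).flatten := flatten_insertT_perm _ _
      _ ~ x :: w := ih.cons x
      _ ~ w ++ [x] := (List.perm_append_singleton x w).symm

theorem rowsIncreasing_Ptab {w : List ℕ} (hw : w.Nodup) : RowsIncreasing (Ptab w) := by
  induction w using List.reverseRecOn with
  | nil => simp [Ptab, RowsIncreasing]
  | append_singleton w x ih =>
    rw [Ptab_append_singleton]
    have hx : (x :: w).Nodup := (List.perm_append_singleton x w).nodup_iff.mp hw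
    exact (ih (List.nodup_cons.mp hx).2).insertT (((flatten_Ptab_perm w).cons x).nodup_iff.mpr hx)

section Bumping

variable {r : List ℕ} {t : List (List ℕ)} {x x' : ℕ}

theorem rowIns_rowIns_of_lt (hlt : x' < x) :
    ∃ y', (rowIns (rowIns r x).1 x').2 = some y' ∧ ∀ y, (rowIns r x).2 = some y → y' < y := by
  have hx : x ∈ (rowIns r x).1 := by
    rcases rowIns_cases r x with ⟨h, -⟩ | ⟨i, hi, h, -⟩
    · simp [h]
    · simp [h, List.mem_set hi]
  rcases rowIns_cases (rowIns r x).1 x' with ⟨-, hle⟩ | ⟨j, hj, h', hx'j, hle'⟩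
  · exact absurd (hle x hx) (not_le.mpr hlt)
  refine ⟨_, by rw [h'], fun y hy => ?_⟩
  rcases rowIns_cases r x with ⟨h, -⟩ | ⟨i, hi, h, hxi, hle⟩ <;> simp only [h] at hy hj hx'j hle' ⊢
  · cases hy
  · cases hy
    have hji : j ≤ i := by
      by_contra hij
      have := hle' i (by simpa using not_le.mp hij)
      simp only [List.getElem_set_self] at this
      omega
    rcases hji.lt_or_eq with hji | rfl
    · rw [List.getElem_set_ne hji.ne']
      exact (hle j hji).trans_lt hxi
    · simpa using hxi

theorem rowIns_rowIns_of_gt (hr : r.Pairwise (· < ·)) (hlt : x < x') {y' : ℕ}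
    (hy' : (rowIns (rowIns r x).1 x').2 = some y') :
    ∃ y, (rowIns r x).2 = some y ∧ y < y' := by
  rcases rowIns_cases (rowIns r x).1 x' with ⟨h', -⟩ | ⟨j, hj, h', hx'j, -⟩ <;>
    rw [h'] at hy' <;> cases hy'
  rcases rowIns_cases r x with ⟨h, hle⟩ | ⟨i, hi, h, -, hle⟩ <;> simp only [h] at hj hx'j ⊢
  · rw [List.getElem_append] at hx'j
    split_ifs at hx'j with hjr
    · exact absurd (hle _ (List.getElem_mem hjr)) (by omega)
    · simp only [List.getElem_singleton] at hx'j
      omega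
  · simp only [List.length_set] at hj
    rw [List.getElem_set] at hx'j ⊢
    split_ifs at hx'j ⊢ with hij
    · omega
    rcases lt_or_gt_of_ne hij with hij | hji
    · exact ⟨_, rfl, List.pairwise_iff_getElem.mp hr i j hi hj hij⟩
    · exact absurd (hle j hji) (by omega)

-- The row bumping lemma.
theorem newBoxRow_lt_newBoxRow_insertT (hlt : x' < x) :
    newBoxRow t x < newBoxRow (insertT t x) x' := by
  induction t generalizing x x' with
  | nil => simp [insertT, newBoxRow, rowIns, List.findIdx?_cons, hlt]
  | cons r rs ih =>
    obtain ⟨y', hy', hlt'⟩ := rowIns_rowIns_of_lt (r := r) hlt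
    cases h : (rowIns r x).2 with
    | none =>
      rw [insertT_cons_of_none h, newBoxRow_cons_of_none h, newBoxRow_cons_of_some hy']
      omega
    | some y =>
      rw [insertT_cons_of_some h, newBoxRow_cons_of_some h, newBoxRow_cons_of_some hy']
      exact Nat.succ_lt_succ (ih (hlt' y h))

theorem newBoxRow_insertT_le (ht : RowsIncreasing t) (hlt : x < x') :
    newBoxRow (insertT t x) x' ≤ newBoxRow t x := by
  induction t generalizing x x' with
  | nil => simp [insertT, newBoxRow, rowIns, List.findIdx?_cons, not_lt.mpr hlt.le]
  | cons r rs ih =>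
    have hr := ht r (by simp)
    have hrs : RowsIncreasing rs := fun q hq => ht q (by simp [hq])
    cases h' : (rowIns (rowIns r x).1 x').2 with
    | none =>
      cases h : (rowIns r x).2 with
      | none => simp [insertT_cons_of_none h, newBoxRow_cons_of_none h']
      | some y => simp [insertT_cons_of_some h, newBoxRow_cons_of_none h']
    | some y' =>
      obtain ⟨y, h, hlt'⟩ := rowIns_rowIns_of_gt hr hlt h'
      rw [insertT_cons_of_some h, newBoxRow_cons_of_some h, newBoxRow_cons_of_some h']
      exact Nat.succ_le_succ (ih hrs hlt')

end Bumping

theorem lt_iff_newBoxRow_lt_newBoxRow_insertT {t : List (List ℕ)} (ht : RowsIncreasing t)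
    {a b : ℕ} (hab : a ≠ b) : b < a ↔ newBoxRow t a < newBoxRow (insertT t a) b := by
  refine ⟨newBoxRow_lt_newBoxRow_insertT, fun h => ?_⟩
  by_contra hba
  exact absurd (newBoxRow_insertT_le ht (lt_of_le_of_ne (not_lt.mp hba) hab)) (not_le.mpr h)

/-- Letters are counted from 1, as in `wv`. -/
def insertionRow (w : List ℕ) (k : ℕ) : ℕ := newBoxRow (Ptab (w.take (k - 1))) (wv w k)

theorem take_eq_take_pred_append_wv {w : List ℕ} {k : ℕ} (hk1 : 1 ≤ k) (hk : k ≤ w.length) :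
    w.take k = w.take (k - 1) ++ [wv w k] := by
  conv_lhs => rw [show k = k - 1 + 1 by omega]
  rw [List.take_add_one, List.getElem?_eq_getElem (by omega), wv,
    List.getD_eq_getElem _ _ (by omega), Option.toList_some]

theorem DSet_eq_filter_insertionRow {w : List ℕ} (hw : w.Nodup) :
    DSet w = (Finset.Ico 1 w.length).filter fun k => insertionRow w k < insertionRow w (k + 1) := by
  refine Finset.filter_congr fun k hk => ?_
  rw [Finset.mem_Ico] at hk
  have htake : w.take (k + 1) = w.take (k - 1) ++ [wv w k, wv w (k + 1)] := by
    rw [take_eq_take_pred_append_wv (by omega) (by omega), Nat.add_sub_cancel,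
      take_eq_take_pred_append_wv hk.1 hk.2.le, List.append_assoc, List.singleton_append]
  have hnd : (w.take (k - 1) ++ [wv w k, wv w (k + 1)]).Nodup :=
    htake ▸ hw.sublist (List.take_sublist _ _)
  have hne : wv w k ≠ wv w (k + 1) := by
    simpa using (List.nodup_append.mp hnd).2.1
  rw [insertionRow, insertionRow, Nat.add_sub_cancel, take_eq_take_pred_append_wv hk.1 hk.2.le,
    Ptab_append_singleton]
  exact lt_iff_newBoxRow_lt_newBoxRow_insertT
    (rowsIncreasing_Ptab (List.nodup_append.mp hnd).1) hne

def appendToRow : List (List ℕ) → ℕ → ℕ → List (List ℕ)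
  | [], _, k => [[k]]
  | r :: rs, 0, k => (r ++ [k]) :: rs
  | r :: rs, d + 1, k => r :: appendToRow rs d k

def rowOf (t : List (List ℕ)) (k : ℕ) : ℕ := t.findIdx fun r => k ∈ r

section AppendToRow

variable (q : List (List ℕ)) (d k : ℕ)

theorem growQ_addBox_shape : growQ k (addBox (shape q) d) q = appendToRow q d k := by
  induction q generalizing d with
  | nil => simp [growQ, appendToRow]
  | cons r rs ih => cases d <;> simp [shape, addBox, growQ, appendToRow, ← ih]

theorem shape_appendToRow : shape (appendToRow q d k) = addBox (shape q) d := by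
  induction q generalizing d with
  | nil => simp [shape, appendToRow, addBox]
  | cons r rs ih => cases d <;> simp_all [shape, appendToRow, addBox]

variable {q d k}

theorem mem_flatten_appendToRow {m : ℕ} :
    m ∈ (appendToRow q d k).flatten ↔ m ∈ q.flatten ∨ m = k := by
  induction q generalizing d with
  | nil => simp [appendToRow]
  | cons r rs ih => cases d <;> simp [appendToRow, ih, or_comm, or_left_comm]

theorem rowOf_appendToRow_of_ne {m : ℕ} (hmk : m ≠ k) (hm : m ∈ q.flatten) :
    rowOf (appendToRow q d k) m = rowOf q m := by
  induction q generalizing d with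
  | nil => simp at hm
  | cons r rs ih =>
    by_cases hmr : m ∈ r
    · cases d <;> simp [appendToRow, rowOf, List.findIdx_cons, hmr]
    · have hmrs : m ∈ rs.flatten := by simpa [hmr] using hm
      cases d <;> simp_all [appendToRow, rowOf, List.findIdx_cons]

theorem rowOf_appendToRow_self (hd : d ≤ q.length) (hk : k ∉ q.flatten) :
    rowOf (appendToRow q d k) k = d := by
  induction q generalizing d with
  | nil => simp_all [appendToRow, rowOf]
  | cons r rs ih =>
    cases d with
    | zero => simp [appendToRow, rowOf, List.findIdx_cons]
    | succ d =>
      have := ih (d := d) (by simpa using hd) (fun h => hk (by simp [h]))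
      simp_all [appendToRow, rowOf, List.findIdx_cons]

end AppendToRow

def qtabStep (s : List (List ℕ) × List (List ℕ) × ℕ) (x : ℕ) :
    List (List ℕ) × List (List ℕ) × ℕ :=
  let p' := insertT s.1 x
  (p', growQ s.2.2 (p'.map List.length) s.2.1, s.2.2 + 1)

theorem foldl_qtabStep (w : List ℕ) :
    w.foldl qtabStep ([], [], 1) = (Ptab w, Qtab w, w.length + 1) := by
  induction w using List.reverseRecOn with
  | nil => rfl
  | append_singleton w x ih =>
    refine Prod.ext ?_ (Prod.ext rfl ?_)
    · simp [List.foldl_append, ih, qtabStep, Ptab_append_singleton]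
    · simp [List.foldl_append, ih, qtabStep]

theorem Qtab_append_singleton (w : List ℕ) (x : ℕ) :
    Qtab (w ++ [x]) = growQ (w.length + 1) (shape (insertT (Ptab w) x)) (Qtab w) := by
  change ((w ++ [x]).foldl qtabStep ([], [], 1)).2.1 = _
  simp [List.foldl_append, foldl_qtabStep, qtabStep, shape]

theorem shape_Qtab (w : List ℕ) : shape (Qtab w) = shape (Ptab w) := by
  induction w using List.reverseRecOn with
  | nil => rfl
  | append_singleton w x ih =>
    rw [Qtab_append_singleton, shape_insertT, ← ih, growQ_addBox_shape, shape_appendToRow, ih,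
      Ptab_append_singleton, shape_insertT]

theorem length_Qtab (w : List ℕ) : (Qtab w).length = (Ptab w).length := by
  simpa [shape] using congrArg List.length (shape_Qtab w)

theorem Qtab_append_singleton_eq_appendToRow (w : List ℕ) (x : ℕ) :
    Qtab (w ++ [x]) = appendToRow (Qtab w) (newBoxRow (Ptab w) x) (w.length + 1) := by
  rw [Qtab_append_singleton, shape_insertT, ← shape_Qtab, growQ_addBox_shape]

theorem mem_flatten_Qtab {w : List ℕ} {m : ℕ} :
    m ∈ (Qtab w).flatten ↔ 1 ≤ m ∧ m ≤ w.length := by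
  induction w using List.reverseRecOn with
  | nil => simp [Qtab]; omega
  | append_singleton w x ih =>
    rw [Qtab_append_singleton_eq_appendToRow, mem_flatten_appendToRow, ih, List.length_append,
      List.length_singleton]
    omega

theorem insertionRow_append_singleton_of_le {w : List ℕ} (x : ℕ) {k : ℕ} (hk1 : 1 ≤ k)
    (hk : k ≤ w.length) :
    insertionRow (w ++ [x]) k = insertionRow w k := by
  rw [insertionRow, insertionRow, List.take_append_of_le_length (by omega), wv, wv,
    List.getD_append _ _ _ _ (by omega)]

theorem insertionRow_append_singleton_self (w : List ℕ) (x : ℕ) :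
    insertionRow (w ++ [x]) (w.length + 1) = newBoxRow (Ptab w) x := by
  simp [insertionRow, wv]

theorem rowOf_Qtab {w : List ℕ} {k : ℕ} (hk1 : 1 ≤ k) (hk : k ≤ w.length) :
    rowOf (Qtab w) k = insertionRow w k := by
  induction w using List.reverseRecOn generalizing k with
  | nil => simp at hk; omega
  | append_singleton w x ih =>
    rw [Qtab_append_singleton_eq_appendToRow]
    rw [List.length_append, List.length_singleton] at hk
    rcases hk.lt_or_eq with hk | rfl
    · rw [rowOf_appendToRow_of_ne (by omega) (mem_flatten_Qtab.mpr ⟨hk1, by omega⟩),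
        ih hk1 (by omega), insertionRow_append_singleton_of_le x hk1 (by omega)]
    · have hd : newBoxRow (Ptab w) x ≤ (Qtab w).length := by
        simpa only [length_Qtab] using newBoxRow_le_length (Ptab w) x
      rw [rowOf_appendToRow_self hd (fun h => by have := mem_flatten_Qtab.mp h; omega),
        insertionRow_append_singleton_self]

theorem DSet_eq_of_Qtab_eq {v w : List ℕ} (hv : v.Nodup) (hw : w.Nodup)
    (hlen : v.length = w.length) (hQ : Qtab v = Qtab w) : DSet v = DSet w := by
  have hrow {k : ℕ} (hk1 : 1 ≤ k) (hk : k ≤ w.length) : insertionRow v k = insertionRow w k := by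
    rw [← rowOf_Qtab hk1 (hlen ▸ hk), ← rowOf_Qtab hk1 hk, hQ]
  rw [DSet_eq_filter_insertionRow hv, DSet_eq_filter_insertionRow hw, hlen]
  refine Finset.filter_congr fun k hk => ?_
  rw [Finset.mem_Ico] at hk
  rw [hrow hk.1 hk.2.le, hrow (by omega) hk.2]

inductive KnuthStep : List ℕ → List ℕ → Prop
  | yxz {x y z : ℕ} (u v : List ℕ) : x < y → y < z →
      KnuthStep (u ++ y :: x :: z :: v) (u ++ y :: z :: x :: v)
  | xzy {x y z : ℕ} (u v : List ℕ) : x < y → y < z →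
      KnuthStep (u ++ x :: z :: y :: v) (u ++ z :: x :: y :: v)

abbrev KnuthEquiv : List ℕ → List ℕ → Prop := Relation.EqvGen KnuthStep

infix:50 " ≡ₖ " => KnuthEquiv

section Knuth

variable {w w' : List ℕ}

theorem KnuthStep.append_append (a b : List ℕ) (h : KnuthStep w w') :
    KnuthStep (a ++ w ++ b) (a ++ w' ++ b) := by
  cases h with
  | yxz u v hxy hyz => simpa using KnuthStep.yxz (a ++ u) (v ++ b) hxy hyz
  | xzy u v hxy hyz => simpa using KnuthStep.xzy (a ++ u) (v ++ b) hxy hyz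

theorem KnuthEquiv.append_append (a b : List ℕ) (h : w ≡ₖ w') : a ++ w ++ b ≡ₖ a ++ w' ++ b := by
  induction h with
  | rel _ _ h => exact .rel _ _ (h.append_append a b)
  | refl => exact .refl _
  | symm _ _ _ ih => exact .symm _ _ ih
  | trans _ _ _ _ _ ih₁ ih₂ => exact .trans _ _ _ ih₁ ih₂

theorem KnuthEquiv.append_left (a : List ℕ) (h : w ≡ₖ w') : a ++ w ≡ₖ a ++ w' := by
  simpa using h.append_append a []

theorem KnuthEquiv.append_right (b : List ℕ) (h : w ≡ₖ w') : w ++ b ≡ₖ w' ++ b := by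
  simpa using h.append_append [] b

theorem knuthEquiv_slide_behind_head {c : List ℕ} {c₀ x : ℕ} (hc : (c₀ :: c).Pairwise (· < ·))
    (hx : x < c₀) : c₀ :: c ++ [x] ≡ₖ c₀ :: x :: c := by
  induction c generalizing c₀ with
  | nil => exact .refl _
  | cons c₁ cs ih =>
    have h₀₁ : c₀ < c₁ := List.rel_of_pairwise_cons hc (by simp)
    calc c₀ :: c₁ :: cs ++ [x] ≡ₖ c₀ :: c₁ :: x :: cs :=
          (ih (List.Pairwise.of_cons hc) (hx.trans h₀₁)).append_left [c₀]
      _ ≡ₖ c₀ :: x :: c₁ :: cs := .symm _ _ (.rel _ _ (KnuthStep.yxz [] cs hx h₀₁))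

theorem knuthEquiv_slide_to_front {u v : List ℕ} {x y : ℕ} (hu : u.Pairwise (· < ·))
    (hux : ∀ a ∈ u, a < x) (hxy : x < y) : u ++ y :: x :: v ≡ₖ y :: (u ++ x :: v) := by
  induction u with
  | nil => exact .refl _
  | cons a u ih =>
    have hstep : KnuthStep (a :: y :: (u ++ x :: v)) (y :: a :: (u ++ x :: v)) := by
      rcases u with _ | ⟨b, u⟩
      · exact KnuthStep.xzy [] v (hux a (by simp)) hxy
      · exact KnuthStep.xzy [] (u ++ x :: v) (List.rel_of_pairwise_cons hu (by simp))
          ((hux b (by simp)).trans hxy)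
    calc a :: u ++ y :: x :: v ≡ₖ a :: y :: (u ++ x :: v) :=
          (ih (List.Pairwise.of_cons hu) fun b hb => hux b (by simp [hb])).append_left [a]
      _ ≡ₖ y :: (a :: u ++ x :: v) := .rel _ _ hstep

theorem knuthEquiv_rowIns {r : List ℕ} {x y : ℕ} (hr : r.Pairwise (· < ·)) (hx : x ∉ r)
    (h : (rowIns r x).2 = some y) : r ++ [x] ≡ₖ y :: (rowIns r x).1 := by
  rcases rowIns_cases r x with ⟨h', -⟩ | ⟨i, hi, h', hxi, hle⟩ <;> rw [h'] at h ⊢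
  · cases h
  cases h
  have hdrop : r.drop i = r[i] :: r.drop (i + 1) := List.drop_eq_getElem_cons hi
  have htake : ∀ a ∈ r.take i, a < x := by
    intro a ha
    obtain ⟨j, hj, rfl⟩ := List.mem_take_iff_getElem.mp ha
    exact lt_of_le_of_ne (hle j (by omega)) (ne_of_mem_of_not_mem (List.getElem_mem _) hx)
  calc r ++ [x] = r.take i ++ (r[i] :: r.drop (i + 1) ++ [x]) := by
        rw [← hdrop, ← List.append_assoc, List.take_append_drop]
    _ ≡ₖ r.take i ++ r[i] :: x :: r.drop (i + 1) :=
        (knuthEquiv_slide_behind_head (hdrop ▸ hr.sublist (List.drop_sublist _ _)) hxi).append_left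
          _
    _ ≡ₖ r[i] :: (r.take i ++ x :: r.drop (i + 1)) :=
        knuthEquiv_slide_to_front (hr.sublist (List.take_sublist _ _)) htake hxi
    _ = r[i] :: r.set i x := by rw [List.set_eq_take_append_cons_drop, if_pos hi]

end Knuth

def readingWord (t : List (List ℕ)) : List ℕ := t.reverse.flatten

theorem readingWord_cons (r : List ℕ) (rs : List (List ℕ)) :
    readingWord (r :: rs) = readingWord rs ++ r := by
  simp [readingWord]

theorem knuthEquiv_insertT {t : List (List ℕ)} {x : ℕ} (ht : RowsIncreasing t)
    (hx : (x :: t.flatten).Nodup) : readingWord t ++ [x] ≡ₖ readingWord (insertT t x) := by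
  induction t generalizing x with
  | nil => exact .refl _
  | cons r rs ih =>
    have hrs : RowsIncreasing rs := fun q hq => ht q (by simp [hq])
    cases h : (rowIns r x).2 with
    | none =>
      rw [insertT_cons_of_none h, rowIns_fst_of_none h, readingWord_cons, readingWord_cons,
        List.append_assoc]
      exact .refl _
    | some y =>
      have hxr : x ∉ r := fun (h : x ∈ r) => (List.nodup_cons.mp hx).1 (by simp [h])
      rw [insertT_cons_of_some h, readingWord_cons, readingWord_cons]
      calc readingWord rs ++ r ++ [x] ≡ₖ readingWord rs ++ y :: (rowIns r x).1 := by
            simpa using (knuthEquiv_rowIns (ht r (by simp)) hxr h).append_left (readingWord rs)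
        _ = readingWord rs ++ [y] ++ (rowIns r x).1 := by simp
        _ ≡ₖ readingWord (insertT rs y) ++ (rowIns r x).1 :=
            (ih hrs (nodup_cons_flatten_of_rowIns_eq_some hx h)).append_right _

theorem knuthEquiv_readingWord_Ptab {w : List ℕ} (hw : w.Nodup) : w ≡ₖ readingWord (Ptab w) := by
  induction w using List.reverseRecOn with
  | nil => exact .refl _
  | append_singleton w x ih =>
    have hx : (x :: w).Nodup := (List.perm_append_singleton x w).nodup_iff.mp hw
    rw [Ptab_append_singleton]
    calc w ++ [x] ≡ₖ readingWord (Ptab w) ++ [x] := (ih (List.nodup_cons.mp hx).2).append_right _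
      _ ≡ₖ readingWord (insertT (Ptab w) x) :=
        knuthEquiv_insertT (rowsIncreasing_Ptab (List.nodup_cons.mp hx).2)
          (((flatten_Ptab_perm w).cons x).nodup_iff.mpr hx)

theorem KnuthStep.pair_sublist_iff {w w' : List ℕ} {c d : ℕ} (hcd : c ≤ d + 1) (hdc : d ≤ c + 1)
    (h : KnuthStep w w') : [c, d] <+ w ↔ [c, d] <+ w' := by
  cases h with
  | @yxz x y z u v hxy hyz =>
    have h₁ := List.pair_sublist_swap (u ++ [y]) v (a := x) (b := z) (c := c) (d := d) (by omega)
    have h₂ := List.pair_sublist_swap (u ++ [y]) v (a := z) (b := x) (c := c) (d := d) (by omega)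
    simp only [List.append_assoc, List.cons_append, List.nil_append] at h₁ h₂
    exact ⟨h₁, h₂⟩
  | @xzy x y z u v hxy hyz =>
    exact ⟨List.pair_sublist_swap u (y :: v) (a := x) (b := z) (by omega),
      List.pair_sublist_swap u (y :: v) (a := z) (b := x) (by omega)⟩

theorem KnuthEquiv.pair_sublist_iff {w w' : List ℕ} {c d : ℕ} (hcd : c ≤ d + 1)
    (hdc : d ≤ c + 1) (h : w ≡ₖ w') : [c, d] <+ w ↔ [c, d] <+ w' := by
  induction h with
  | rel _ _ h => exact h.pair_sublist_iff hcd hdc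
  | refl => exact .rfl
  | symm _ _ _ ih => exact ih.symm
  | trans _ _ _ _ _ ih₁ ih₂ => exact ih₁.trans ih₂

theorem IsPermList.stdz_eq {w : List ℕ} (hw : IsPermList w) : stdz w = w := by
  have hmap : (List.range w.length).map (fun j => w.getD j 0) = w :=
    List.ext_getElem (by simp) fun j _ hj => by simp [List.getElem?_eq_getElem hj]
  have hcount (c : ℕ) : (List.range w.length).countP (fun j => decide (w.getD j 0 ≤ c)) =
      w.countP (fun a => decide (a ≤ c)) := by
    conv_rhs => rw [← hmap]
    rw [List.countP_map]
    rfl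
  refine List.ext_getElem (by simp [stdz]) fun i hi hi' => ?_
  simp only [stdz, List.getElem_map, List.getElem_range]
  have hwi := List.getD_eq_getElem w 0 hi'
  have hcond : ∀ j ∈ List.range w.length,
      decide (w.getD j 0 < w.getD i 0 ∨ (w.getD j 0 = w.getD i 0 ∧ j ≤ i)) =
        decide (w.getD j 0 ≤ w.getD i 0) := by
    intro j hj
    rw [List.mem_range] at hj
    rw [List.getD_eq_getElem w 0 hj, hwi, decide_eq_decide]
    by_cases hij : j = i
    · subst hij; simp
    · have : w[j] ≠ w[i] := fun h => hij (hw.nodup.getElem_inj_iff.mp h)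
      omega
  rw [List.filter_congr hcond, ← List.countP_eq_length_filter, hcount, hw.countP_eq, hwi,
    List.countP_le_range'_one (hw.mem_iff.mp (List.getElem_mem hi')).2]

theorem IsPermList.mem_IdSet_iff_s13 {w : List ℕ} (hw : IsPermList w) {v : ℕ} :
    v ∈ IdSet w ↔ v ∈ Finset.Icc 1 w.length ∧ [v + 1, v] <+ w := by
  rw [IdSet, Finset.mem_filter, hw.stdz_eq, List.pair_sublist_iff_getElem]
  refine and_congr_right fun _ => ⟨?_, ?_⟩
  · rintro ⟨i, hi, j, hj, hji, hvi, hvj⟩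
    rw [Finset.mem_range] at hi hj
    rw [List.getD_eq_getElem _ _ hi] at hvi
    rw [List.getD_eq_getElem _ _ hj] at hvj
    exact ⟨j, i, hj, hi, hji, hvj, hvi⟩
  · rintro ⟨j, i, hj, hi, hji, hvj, hvi⟩
    refine ⟨i, Finset.mem_range.mpr hi, j, Finset.mem_range.mpr hj, hji, ?_, ?_⟩
    · rwa [List.getD_eq_getElem _ _ hi]
    · rwa [List.getD_eq_getElem _ _ hj]

/-- ȷ preserves the inverse descent set and complements the descent set to n. -/
theorem stmt13 (l σ : List ℕ) (hl : IsPermList l) (h : isFS σ l) :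
    IdSet σ = IdSet l ∧ DSet σ = (DSet l).image fun k => l.length - k := by
  obtain ⟨hσ, hlen, hP, hQ⟩ := h
  constructor
  · have hknuth : σ ≡ₖ l := calc
      σ ≡ₖ readingWord (Ptab σ) := knuthEquiv_readingWord_Ptab hσ.nodup
      _ = readingWord (Ptab l) := by rw [hP]
      _ ≡ₖ l := .symm _ _ (knuthEquiv_readingWord_Ptab hl.nodup)
    ext v
    rw [hσ.mem_IdSet_iff_s13, hl.mem_IdSet_iff_s13, hlen, hknuth.pair_sublist_iff (by omega) (by omega)]
  · rw [DSet_eq_of_Qtab_eq hσ.nodup (isPermList_rcL hl).nodup (by rw [hlen, rcL_length]) hQ,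
      hl.DSet_rcL]
end

section
/- A permutation π ∈ Sₙ with first letter π₁ = k is uniquely determined by the triple (π^t, π^b, Sh(π)), where π^t is the subword of letters greater than k, π^b is the subword of letters smaller than k, and Sh(π) = {i : 1 ≤ i < n, (πᵢ ≥ π₁ > πᵢ₊₁) or (πᵢ < π₁ ≤ πᵢ₊₁)}; i.e., the map π ↦ (π^t, π^b, Sh(π)) is injective on permutations in Sₙ with first letter k. -/
/-- Top subword: letters larger than the first letter. -/
def topw (l : List ℕ) : List ℕ := l.filter fun x => decide (Fst l < x)

/-- Bottom subword: letters smaller than the first letter. -/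
def botw (l : List ℕ) : List ℕ := l.filter fun x => decide (x < Fst l)

/-- Shuffle set of a word. -/
def ShSet (l : List ℕ) : Finset ℕ :=
  (Finset.Ico 1 l.length).filter fun i =>
    (Fst l ≤ wv l i ∧ wv l (i + 1) < Fst l) ∨ (wv l i < Fst l ∧ Fst l ≤ wv l (i + 1))

/-- The prescribed shuffle set of φ(π). -/
def newSh (n : ℕ) (l : List ℕ) : Finset ℕ :=
  if (ShSet l).card % 2 = 1 then
    insert 1 (((ShSet l).filter fun j => 2 ≤ j).image fun j => n + 1 - j)
  else ((ShSet l).filter fun j => 2 ≤ j).image fun j => n + 1 - j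

/-- `ρ = φ(π)` for the Fu–Hua–Vajnovszki involution φ on Sₙ, stated relationally:
ρ is a permutation with the same first letter whose top subword standardizes to
ȷ(c(π^t)) (witnessed by σt), whose bottom subword is ȷ(π^b) (witnessed by σb),
and whose shuffle set is the prescribed one. -/
def FHVrel (n : ℕ) (π ρ σt σb : List ℕ) : Prop :=
  π.length = n ∧ IsPermList π ∧ ρ.length = n ∧ IsPermList ρ ∧ Fst ρ = Fst π ∧
  isFS σt (stdz (topw π)) ∧ stdz (topw ρ) = σt ∧
  isFS σb (botw π) ∧ botw ρ = σb ∧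
  ShSet ρ = newSh n π

theorem aux_filter_eq {l : List ℕ} (p : ℕ → Bool) :
    ∀ {m : List ℕ}, l.map p = m.map p → l.filter p = m.filter p →
    l.filter (fun x => !p x) = m.filter (fun x => !p x) → l = m := by
  induction l with
  | nil => intro m hmap _ _; cases m <;> simp_all
  | cons a l ih =>
    intro m hmap h1 h2
    cases m with
    | nil => simp_all
    | cons b m =>
      simp only [List.map_cons, List.cons.injEq] at hmap
      obtain ⟨hab, hmap⟩ := hmap
      by_cases hpa : p a
      · have hpb : p b := hab ▸ hpa
        rw [List.filter_cons_of_pos hpa, List.filter_cons_of_pos hpb] at h1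
        rw [List.filter_cons_of_neg (by simp [hpa]),
            List.filter_cons_of_neg (by simp [hpb])] at h2
        simp only [List.cons.injEq] at h1
        exact h1.1 ▸ (ih hmap h1.2 h2) ▸ rfl
      · have hpb : ¬ p b := fun h => hpa (hab ▸ h)
        rw [List.filter_cons_of_neg hpa, List.filter_cons_of_neg hpb] at h1
        rw [List.filter_cons_of_pos (by simp [hpa]),
            List.filter_cons_of_pos (by simp [hpb])] at h2
        simp only [List.cons.injEq] at h2
        exact h2.1 ▸ (ih hmap h1 h2.2) ▸ rfl

theorem aux_split (w : List ℕ) (hw : 0 < w.length) (hperm : IsPermList w) :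
    w.filter (fun x => decide (Fst w ≤ x)) = Fst w :: topw w ∧
    w.filter (fun x => !decide (Fst w ≤ x)) = botw w := by
  obtain ⟨a, t, rfl⟩ : ∃ a t, w = a :: t := by
    cases w with
    | nil => simp at hw
    | cons a t => exact ⟨a, t, rfl⟩
  have hF : Fst (a :: t) = a := by simp [Fst, wv]
  have hnd : (a :: t).Nodup := (List.nodup_range' ..).perm hperm.symm
  have hat : a ∉ t := (List.nodup_cons.mp hnd).1
  constructor
  · rw [hF, List.filter_cons_of_pos (by simp)]
    congr 1
    rw [List.filter_congr (l := t) (q := fun x => decide (a < x))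
      (fun x hx => by
        have hxa : x ≠ a := fun h => hat (h ▸ hx)
        simp only [decide_eq_decide]; omega)]
    simp [topw, hF, List.filter_cons]
  · rw [hF, List.filter_cons_of_neg (by simp)]
    rw [List.filter_congr (l := t) (q := fun x => decide (x < a))
      (fun x hx => by
        rw [← decide_not]
        simp only [decide_eq_decide]
        omega)]
    simp [botw, hF, List.filter_cons]

/-- A permutation with first letter k is uniquely determined by the triple
(top subword, bottom subword, shuffle set). -/
theorem stmt15 (n k : ℕ) (l m : List ℕ)
    (hl : l.length = n) (hm : m.length = n)
    (hpl : IsPermList l) (hpm : IsPermList m)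
    (hFl : Fst l = k) (hFm : Fst m = k)
    (ht : topw l = topw m) (hb : botw l = botw m) (hsh : ShSet l = ShSet m) :
    l = m := by
  rcases Nat.eq_zero_or_pos n with h0 | hpos
  · rw [List.length_eq_zero_iff.mp (hl.trans h0), List.length_eq_zero_iff.mp (hm.trans h0)]
  set p : ℕ → Bool := fun x => decide (k ≤ x) with hp
  have hB : ∀ i, i < n → (k ≤ l.getD i 0 ↔ k ≤ m.getD i 0) := by
    intro i
    induction i with
    | zero =>
      intro _
      have h1 : l.getD 0 0 = k := by simpa [Fst, wv] using hFl
      have h2 : m.getD 0 0 = k := by simpa [Fst, wv] using hFm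
      rw [h1, h2]
    | succ i ih =>
      intro hi
      have IH := ih (Nat.lt_of_succ_lt hi)
      have hmem : (i + 1 ∈ ShSet l) ↔ (i + 1 ∈ ShSet m) := by rw [hsh]
      simp only [ShSet, Finset.mem_filter, Finset.mem_Ico, hl, hm, hFl, hFm, wv,
        Nat.add_sub_cancel] at hmem
      have hcond : 1 ≤ i + 1 ∧ i + 1 < n := ⟨Nat.le_add_left 1 i, hi⟩
      simp only [hcond, and_true, true_and] at hmem
      omega
  have hmapeq : l.map p = m.map p := by
    apply List.ext_getElem (by rw [List.length_map, List.length_map, hl, hm])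
    intro i h1 h2
    simp only [List.length_map] at h1 h2
    have hBi := hB i (hl ▸ h1)
    rw [List.getD_eq_getElem l 0 h1, List.getD_eq_getElem m 0 h2] at hBi
    simp only [List.getElem_map, hp, decide_eq_decide]
    exact hBi
  have hsl := aux_split l (hl ▸ hpos) hpl
  have hsm := aux_split m (hm ▸ hpos) hpm
  rw [hFl] at hsl
  rw [hFm] at hsm
  apply aux_filter_eq p hmapeq
  · rw [hsl.1, hsm.1, ht]
  · rw [hsl.2, hsm.2, hb]
end

section
/- INV(π) equals the total count of occurrences of the vincular patterns \underline{21} + 3\underline{12} + 3\underline{21} + 2\underline{31} in π, for every permutation π. -/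
lemma IsPermList.nodup_s18 {l : List ℕ} (h : IsPermList l) : l.Nodup :=
  h.nodup_iff.mpr List.nodup_range'

lemma wv_injOn_of_nodup {l : List ℕ} (hl : l.Nodup) : Set.InjOn (wv l) (Set.Icc 1 l.length) := by
  intro i ⟨hi₁, hi₂⟩ j ⟨hj₁, hj₂⟩ h
  simp only [wv, List.getD_eq_getElem l 0 (by omega : i - 1 < l.length),
    List.getD_eq_getElem l 0 (by omega : j - 1 < l.length), hl.getElem_inj_iff] at h
  omega

lemma tripCount2_congr {l : List ℕ} {p q : ℕ → ℕ → ℕ → Bool}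
    (h : ∀ i j, 1 ≤ i → i < j → j < l.length →
      p (wv l i) (wv l j) (wv l (j + 1)) = q (wv l i) (wv l j) (wv l (j + 1))) :
    tripCount2 l p = tripCount2 l q := by
  unfold tripCount2
  congr 1
  refine Finset.filter_congr fun x hx => ?_
  simp only [Finset.mem_product, Finset.mem_Icc, Finset.mem_Ico] at hx
  exact and_congr_right fun hlt => by rw [h _ _ hx.1.1 hlt hx.2.2]

open Finset in
lemma INV_eq_des_add_tripCount2 (l : List ℕ) :
    INV l = des l + tripCount2 l (fun a _ c => decide (c < a)) := by
  unfold INV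
  rw [← card_filter_add_card_filter_not (p := fun q : ℕ × ℕ => q.2 = q.1 + 1)]
  congr 1
  · refine card_nbij' Prod.fst (fun i => (i, i + 1)) ?_ ?_ ?_ ?_
    · rintro ⟨i, k⟩
      simp only [mem_coe, mem_filter, mem_product, mem_Icc, DSet, mem_Ico]
      rintro ⟨⟨⟨hi, hk⟩, hik, hw⟩, rfl⟩
      exact ⟨⟨hi.1, by omega⟩, hw⟩
    · intro i
      simp only [DSet, mem_coe, mem_filter, mem_Ico, mem_product, mem_Icc]
      rintro ⟨hi, hw⟩
      exact ⟨⟨⟨⟨hi.1, by omega⟩, by omega, by omega⟩, by omega, hw⟩, trivial⟩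
    · rintro ⟨i, k⟩
      simp only [mem_coe, mem_filter]
      rintro ⟨-, rfl⟩
      rfl
    · intro i _
      rfl
  · refine card_nbij' (fun q => (q.1, q.2 - 1)) (fun q => (q.1, q.2 + 1)) ?_ ?_ ?_ ?_
    · rintro ⟨i, k⟩
      simp only [mem_coe, mem_filter, mem_product, mem_Icc, mem_Ico, decide_eq_true_eq]
      rintro ⟨⟨⟨hi, hk⟩, hik, hw⟩, hne⟩
      refine ⟨⟨hi, by omega, by omega⟩, by omega, ?_⟩
      rwa [Nat.sub_add_cancel (by omega)]
    · rintro ⟨i, j⟩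
      simp only [mem_coe, mem_filter, mem_product, mem_Icc, mem_Ico, decide_eq_true_eq]
      rintro ⟨⟨hi, hj⟩, hij, hw⟩
      exact ⟨⟨⟨hi, by omega, by omega⟩, by omega, hw⟩, by omega⟩
    · rintro ⟨i, k⟩
      simp only [mem_coe, mem_filter, mem_product, mem_Icc, Prod.mk.injEq, true_and]
      omega
    · rintro ⟨i, j⟩ -
      simp

/-- INV equals the number of occurrences of the vincular patterns
21 + 3(12) + 3(21) + 2(31) (adjacency on the last two letters). -/
theorem stmt18 (l : List ℕ) (hperm : IsPermList l) :
    INV l = des l + tripCount2 l (fun a b c =>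
      decide ((b < c ∧ c < a) ∨ (c < b ∧ b < a) ∨ (c < a ∧ a < b))) := by
  rw [INV_eq_des_add_tripCount2]
  congr 1
  refine tripCount2_congr fun i j hi hij hj => ?_
  have hinj := wv_injOn_of_nodup hperm.nodup_s18
  have hab : wv l i ≠ wv l j := fun h => by
    have := hinj ⟨hi, by omega⟩ ⟨by omega, by omega⟩ h; omega
  have hbc : wv l j ≠ wv l (j + 1) := fun h => by
    have := hinj ⟨by omega, by omega⟩ ⟨by omega, by omega⟩ h; omega
  simp only [decide_eq_decide]
  omega
end
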